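/- arXiv:2202.10183 — 3 statements merged into one kernel-verified Lean document; each statement's English description precedes it below -/
import Mathlib

section
/- Let J = {1,…,n−1} and let 𝒥 be the set of (n−1)-element subsets of V. Let E ∈ B_V and suppose there is k > 0 such that for every F′ ∈ B⁰_V and every I ∈ 𝒥, ν^J(π_J(F′ ∩ E)) ≤ k·ν^I(π_I(F′ ∩ E)). Suppose F ⊆ E is of the form F = E ∩ ⋂_{i<ω} F_i with each F_i ∈ B⁰_V. Then for every I ∈ 𝒥, ν^J(π_J(F)) ≤ k·ν^I(π_I(F)). -/
/-! In Mathlib a measure evaluated at a non-measurable set is its outer measure, so the bound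
holds for every `F ⊆ E`. For fixed `I`, `S ↦ ν^J(π_J(E ∩ π_I⁻¹ S))` is an outer measure on `M^I`,
and the hypothesis bounds it by `κ • ν^I` on the algebra of definable sets. A finite measure on the
σ-algebra generated by an algebra of sets agrees there with the outer measure it induces from that
algebra (Carathéodory), so an outer measure dominated by it on the algebra is dominated by it
everywhere. Apply this at `S = π_I(F)`. -/

open FirstOrder MeasureTheory Set
open scoped ENNReal

namespace MeasureAmalgamation

variable (L : FirstOrder.Language) (M : Type*) [L.Structure M]

/-- `𝓜` is ℵ₁-saturated: every countable finitely satisfiable set of `L`-formulas in one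
free variable with parameters from `M` is realized in `M`. -/
def Aleph1Saturated : Prop :=
  ∀ S : Set (L.Formula (M ⊕ Fin 1)), S.Countable →
    (∀ T : Finset (L.Formula (M ⊕ Fin 1)), ↑T ⊆ S →
      ∃ a : M, ∀ φ ∈ T, φ.Realize (Sum.elim id fun _ => a)) →
    ∃ a : M, ∀ φ ∈ S, φ.Realize (Sum.elim id fun _ => a)

/-- The σ-algebra `B_α` generated by the Boolean algebra `B⁰_α` of parameter-definable
subsets of `M^α`. -/
def defSigma (α : Type*) : MeasurableSpace (α → M) :=
  MeasurableSpace.generateFrom {s : Set (α → M) | (Set.univ : Set M).Definable L s}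

variable (n : ℕ)

/-- The projection `π_I : M^V → M^I`. -/
def proj (I : Finset (Fin n)) (x : Fin n → M) : ↥I → M := fun i => x ↑i

/-- The Boolean algebra `B⁰_{V,I}` generated by preimages under `π_I` of sets in `B⁰_I`. -/
def cylDef (I : Finset (Fin n)) : Set (Set (Fin n → M)) :=
  {s | ∃ t : Set (↥I → M), (Set.univ : Set M).Definable L t ∧ s = proj M n I ⁻¹' t}

/-- The σ-algebra `B_{V,I}` generated by `B⁰_{V,I}`. -/
def cylSigma (I : Finset (Fin n)) : MeasurableSpace (Fin n → M) :=
  MeasurableSpace.generateFrom (cylDef L M n I)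

/-- The push-forward measure `ν^I` of `ν = ν^V` under `π_I`. -/
noncomputable def nuI (ν : @Measure (Fin n → M) (defSigma L M (Fin n)))
    (I : Finset (Fin n)) : @Measure (↥I → M) (defSigma L M ↥I) :=
  @Measure.map _ _ (defSigma L M (Fin n)) (defSigma L M ↥I) (proj M n I) ν

/-- Combining a `W`-tuple and a `(V ∖ W)`-tuple into a `V`-tuple. -/
def glue (W : Finset (Fin n)) (x : ↥W → M) (y : ↥(Wᶜ) → M) : Fin n → M :=
  fun i => if h : i ∈ W then x ⟨i, h⟩ else y ⟨i, Finset.mem_compl.mpr h⟩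

/-- The Definability condition: for all `W ⊆ V` and `B ∈ B_V`, the function
`x_W ↦ ν^{V∖W}(B(x_W))` is `B_W`-measurable. -/
def DefinabilityCond (ν : @Measure (Fin n → M) (defSigma L M (Fin n))) : Prop :=
  ∀ (W : Finset (Fin n)) (B : Set (Fin n → M)),
    MeasurableSet[defSigma L M (Fin n)] B →
    @Measurable _ _ (defSigma L M ↥W) _
      (fun x : ↥W → M => nuI L M n ν Wᶜ {y : ↥(Wᶜ) → M | glue M n W x y ∈ B})

/-- The Fubini condition: for all `W ⊆ V` and essentially bounded `B_V`-measurable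
`f : M^V → ℝ`, `∫ f dν^V = ∫∫ f dν^W dν^{V∖W}`. -/
def FubiniCond (ν : @Measure (Fin n → M) (defSigma L M (Fin n))) : Prop :=
  ∀ (W : Finset (Fin n)) (f : (Fin n → M) → ℝ),
    @Measurable _ _ (defSigma L M (Fin n)) _ f →
    (∃ C : ℝ, ∀ᵐ x ∂ν, |f x| ≤ C) →
    ∫ x, f x ∂ν =
      ∫ y, (∫ x, f (glue M n W x y) ∂(nuI L M n ν W)) ∂(nuI L M n ν Wᶜ)

/-- The index set `J = {1,…,n−1}`, i.e. all indices except the last one. -/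
def Jset (n : ℕ) (hn : 2 ≤ n) : Finset (Fin n) := {(⟨n - 1, by omega⟩ : Fin n)}ᶜ

section SetAlgebra

open MeasurableSpace

variable {α : Type*} [m : MeasurableSpace α] {𝒜 : Set (Set α)}

theorem _root_.MeasureTheory.IsSetAlgebra.le_caratheodory_inducedOuterMeasure
    (h𝒜 : IsSetAlgebra 𝒜) (hgen : m = generateFrom 𝒜) (μ : Measure α) :
    m ≤ (inducedOuterMeasure (fun s (_ : s ∈ 𝒜) => μ s) h𝒜.empty_mem
      measure_empty).caratheodory := by
  refine hgen.trans_le <| generateFrom_le fun s hs =>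
    OuterMeasure.ofFunction_caratheodory fun t => ?_
  by_cases ht : t ∈ 𝒜
  · rw [extend_eq _ ht, extend_eq _ (h𝒜.inter_mem ht hs), extend_eq _ (h𝒜.sdiff_mem ht hs)]
    exact (measure_inter_add_sdiff t (hgen ▸ measurableSet_generateFrom hs)).le
  · simp [extend, ht]

theorem _root_.MeasureTheory.IsSetAlgebra.inducedOuterMeasure_eq
    (h𝒜 : IsSetAlgebra 𝒜) (hgen : m = generateFrom 𝒜) (μ : Measure α) [IsFiniteMeasure μ]
    {s : Set α} (hs : MeasurableSet s) :
    inducedOuterMeasure (fun s (_ : s ∈ 𝒜) => μ s) h𝒜.empty_mem measure_empty s = μ s := by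
  set ν := inducedOuterMeasure (fun s (_ : s ∈ 𝒜) => μ s) h𝒜.empty_mem measure_empty
  have hcar := h𝒜.le_caratheodory_inducedOuterMeasure hgen μ
  have hμν : μ.toOuterMeasure ≤ ν := le_inducedOuterMeasure.2 fun _ _ => le_rfl
  have hν𝒜 : ∀ t ∈ 𝒜, μ t = ν.toMeasure hcar t := fun t ht => by
    rw [toMeasure_apply _ _ (hgen ▸ measurableSet_generateFrom ht)]
    exact le_antisymm (hμν t) ((OuterMeasure.ofFunction_le t).trans (extend_eq _ ht).le)
  have hμ : μ = ν.toMeasure hcar :=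
    ext_of_generate_finite 𝒜 hgen (fun s hs t ht _ => h𝒜.inter_mem hs ht) hν𝒜
      (hν𝒜 _ h𝒜.univ_mem)
  rw [hμ, toMeasure_apply _ _ hs]

theorem _root_.MeasureTheory.IsSetAlgebra.outerMeasure_le_of_forall_mem_le
    (h𝒜 : IsSetAlgebra 𝒜) (hgen : m = generateFrom 𝒜) (μ : Measure α) [IsFiniteMeasure μ]
    {ρ : OuterMeasure α} (hρ : ∀ s ∈ 𝒜, ρ s ≤ μ s) (s : Set α) : ρ s ≤ μ s :=
  calc ρ s ≤ ρ (toMeasurable μ s) := measure_mono (subset_toMeasurable μ s)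
    _ ≤ inducedOuterMeasure (fun s (_ : s ∈ 𝒜) => μ s) h𝒜.empty_mem measure_empty
          (toMeasurable μ s) := le_inducedOuterMeasure.2 hρ _
    _ = μ s := by
      rw [h𝒜.inducedOuterMeasure_eq hgen μ (measurableSet_toMeasurable μ s),
        measure_toMeasurable]

end SetAlgebra

section Projections

variable {L M n}

theorem isSetAlgebra_definable (α : Type*) :
    IsSetAlgebra {s : Set (α → M) | (Set.univ : Set M).Definable L s} where
  empty_mem := Set.definable_empty
  compl_mem _ hs := hs.compl
  union_mem _ _ hs ht := hs.union ht

theorem measurable_proj (I : Finset (Fin n)) :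
    Measurable[defSigma L M (Fin n), defSigma L M I] (proj M n I) :=
  @measurable_generateFrom _ _ (defSigma L M (Fin n)) _ _ fun _ ht =>
    MeasurableSpace.measurableSet_generateFrom (ht.preimage_comp Subtype.val)

theorem nuI_univ (ν : @Measure (Fin n → M) (defSigma L M (Fin n))) (I : Finset (Fin n)) :
    nuI L M n ν I univ = ν univ := by
  let _ := defSigma L M (Fin n)
  let _ := defSigma L M I
  rw [nuI, Measure.map_apply (measurable_proj I) MeasurableSet.univ, preimage_univ]

theorem nuI_proj_image_le_of_subset (ν : @Measure (Fin n → M) (defSigma L M (Fin n)))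
    (hν : ν univ ≠ ∞) {E : Set (Fin n → M)} {I K : Finset (Fin n)} {κ : NNReal}
    (hbound : ∀ F' : Set (Fin n → M), (Set.univ : Set M).Definable L F' →
      nuI L M n ν K (proj M n K '' (F' ∩ E)) ≤ κ * nuI L M n ν I (proj M n I '' (F' ∩ E)))
    {F : Set (Fin n → M)} (hFE : F ⊆ E) :
    nuI L M n ν K (proj M n K '' F) ≤ κ * nuI L M n ν I (proj M n I '' F) := by
  have hfin : IsFiniteMeasure (nuI L M n ν I) := ⟨by rw [nuI_univ]; exact hν.lt_top⟩
  let ρ : OuterMeasure (I → M) := OuterMeasure.map (proj M n I) <|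
    OuterMeasure.restrict E <| OuterMeasure.comap (proj M n K) <|
      @Measure.toOuterMeasure _ (defSigma L M K) (nuI L M n ν K)
  have hρ (S : Set (I → M)) : ρ S = nuI L M n ν K (proj M n K '' (proj M n I ⁻¹' S ∩ E)) := by
    simp only [ρ, OuterMeasure.map_apply, OuterMeasure.restrict_apply, OuterMeasure.comap_apply,
      Measure.coe_toOuterMeasure]
  have hρ_le : ∀ S : Set (I → M), (Set.univ : Set M).Definable L S → ρ S ≤ κ * nuI L M n ν I S :=
    fun S hS => by
      rw [hρ]
      refine (hbound _ (hS.preimage_comp Subtype.val)).trans (mul_le_mul_right ?_ _)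
      exact measure_mono (image_subset_iff.2 inter_subset_left)
  calc nuI L M n ν K (proj M n K '' F)
      ≤ ρ (proj M n I '' F) := by
        rw [hρ]
        exact measure_mono (image_mono fun x hx => ⟨mem_image_of_mem _ hx, hFE hx⟩)
    _ ≤ κ * nuI L M n ν I (proj M n I '' F) :=
        (isSetAlgebra_definable I).outerMeasure_le_of_forall_mem_le (m := defSigma L M I) rfl
          (κ • nuI L M n ν I) hρ_le _

end Projections

theorem lemma_intersection_general
    (L : FirstOrder.Language) (M : Type*) [L.Structure M]
    (n : ℕ) (hn : 2 ≤ n)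
    (ν : @Measure (Fin n → M) (defSigma L M (Fin n)))
    (hprob : ν Set.univ = 1)
    (E : Set (Fin n → M))
    (κ : NNReal)
    (hc : ∀ F' : Set (Fin n → M), (Set.univ : Set M).Definable L F' →
      ∀ I : Finset (Fin n), I.card = n - 1 →
        nuI L M n ν (Jset n hn) (proj M n (Jset n hn) '' (F' ∩ E)) ≤
          (κ : ℝ≥0∞) * nuI L M n ν I (proj M n I '' (F' ∩ E)))
    (Fseq : ℕ → Set (Fin n → M))
    (F : Set (Fin n → M)) (hF : F = E ∩ ⋂ i : ℕ, Fseq i) :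
    ∀ I : Finset (Fin n), I.card = n - 1 →
      nuI L M n ν (Jset n hn) (proj M n (Jset n hn) '' F) ≤
        (κ : ℝ≥0∞) * nuI L M n ν I (proj M n I '' F) := fun I hI =>
  nuI_proj_image_le_of_subset ν (hprob ▸ ENNReal.one_ne_top) (fun F' hF' => hc F' hF' I hI)
    (hF ▸ inter_subset_left)

/-- **Lemma 2.5(1)**: if `E ∈ B_V` satisfies condition (c) and `F ⊆ E` is a countable
intersection of sets in `B⁰_V` with `E`, then `ν^J(π_J(F)) ≤ k·ν^I(π_I(F))` for every
`(n−1)`-subset `I` of `V`. -/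
theorem lemma_intersection
    (L : FirstOrder.Language) (M : Type*) [L.Structure M]
    [Countable (Σ l, L.Functions l)] [Countable (Σ l, L.Relations l)]
    (hsat : Aleph1Saturated L M)
    (n : ℕ) (hn : 2 ≤ n)
    (ν : @Measure (Fin n → M) (defSigma L M (Fin n)))
    (hprob : ν Set.univ = 1)
    (hdef : DefinabilityCond L M n ν)
    (hfub : FubiniCond L M n ν)
    (E : Set (Fin n → M))
    (hE : MeasurableSet[defSigma L M (Fin n)] E)
    (κ : NNReal) (hκ : 0 < κ)
    (hc : ∀ F' : Set (Fin n → M), (Set.univ : Set M).Definable L F' →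
      ∀ I : Finset (Fin n), I.card = n - 1 →
        nuI L M n ν (Jset n hn) (proj M n (Jset n hn) '' (F' ∩ E)) ≤
          (κ : ℝ≥0∞) * nuI L M n ν I (proj M n I '' (F' ∩ E)))
    (Fseq : ℕ → Set (Fin n → M))
    (hFseq : ∀ i : ℕ, (Set.univ : Set M).Definable L (Fseq i))
    (F : Set (Fin n → M)) (hF : F = E ∩ ⋂ i : ℕ, Fseq i) :
    ∀ I : Finset (Fin n), I.card = n - 1 →
      nuI L M n ν (Jset n hn) (proj M n (Jset n hn) '' F) ≤
        (κ : ℝ≥0∞) * nuI L M n ν I (proj M n I '' F) :=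
  lemma_intersection_general L M n hn ν hprob E κ hc Fseq F hF

end MeasureAmalgamation
end

section
/- Let J = {1,…,n−1}. Suppose E ∈ B_V satisfies ν^J(π_J(E)) > 0 and there is l ∈ ℕ such that for every ā ∈ E the fibre π_J⁻¹(π_J(ā)) ∩ E has at most l elements. Let X ⊆ M be a countable set such that E lies in the σ-algebra generated by the X-definable subsets of M^V. Then there exist F ⊆ E which is a countable intersection of X-definable sets in B⁰_V with E, a natural number r, and an L-formula ψ(x̄) with parameters from X, such that ν^J(π_J(F)) > 0 and, for every ā = (a₁,…,a_n) ∈ F, the formula ψ(ā_J, x_n) isolates the complete type of a_n over X ∪ {a₁,…,a_{n−1}} in 𝓜 (i.e. a_n satisfies it and it implies every formula over X ∪ {a₁,…,a_{n−1}} satisfied by a_n), and this type has exactly r realizations in 𝓜. -/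
open FirstOrder MeasureTheory Set
open scoped ENNReal

namespace MeasureAmalgamation

variable (L : FirstOrder.Language) (M : Type*) [L.Structure M]

variable (n : ℕ)

/-- The set of realizations in `𝓜` of the complete type of `a` over `Z`: the elements of `M`
satisfying every `L`-formula with parameters from `Z` which is satisfied by `a`. -/
def typeRealizations (Z : Set M) (a : M) : Set M :=
  {b | ∀ (m : ℕ) (χ : L.Formula (Fin m ⊕ Fin 1)) (q : Fin m → M), (∀ i, q i ∈ Z) →
    χ.Realize (Sum.elim q fun _ => a) → χ.Realize (Sum.elim q fun _ => b)}

/-- A set `ψS` (the solution set of a formula over `Z`) isolates the type of `a` over `Z`: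
`a` satisfies it, and it implies every formula with parameters from `Z` satisfied by `a`. -/
def IsolatesTypeOver (Z : Set M) (ψS : Set M) (a : M) : Prop :=
  a ∈ ψS ∧ ∀ (m : ℕ) (χ : L.Formula (Fin m ⊕ Fin 1)) (q : Fin m → M), (∀ i, q i ∈ Z) →
    χ.Realize (Sum.elim q fun _ => a) → ∀ b ∈ ψS, χ.Realize (Sum.elim q fun _ => b)


/-!
Fix `a ∈ E` and write `J` for the coordinates other than the last one. A realization `b` of
the type of `a_n` over `X ∪ a_J` gives a tuple `a[n ↦ b]` with the same type over `X` as `a`;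
since `E` lies in the σ-algebra generated by the `X`-definable sets, `a[n ↦ b]` is again in
`E`, and it lies in the `π_J`-fibre of `a`. So the type has finitely many realizations, and by
ℵ₁-saturation it is isolated by one of its formulas, which has the form `ψ(a_J, x)` for an
`X`-definable set `ψ`. The tuples at which a given `ψ` isolates the type with exactly `r`
realizations form a countable intersection of `X`-definable sets. Countably many pairs
`(ψ, r)` cover `E`, so by countable subadditivity one of them meets `E` in a set whose
projection has positive `ν^J`-measure.
-/

theorem _root_.Set.le_encard_iff_exists_injective {β : Type*} {t : Set β} {k : ℕ} :
    (k : ℕ∞) ≤ t.encard ↔ ∃ u : Fin k → β, Function.Injective u ∧ ∀ j, u j ∈ t := by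
  constructor
  · intro hk
    obtain ⟨t', ht't, ht'⟩ := exists_subset_encard_eq hk
    have := (finite_of_encard_eq_coe ht').to_subtype
    have hcard : Nat.card t' = k := by
      rw [Nat.card_coe_set_eq, ncard_def, ht', ENat.toNat_natCast]
    let e := Finite.equivFinOfCardEq hcard
    exact ⟨fun j => e.symm j, Subtype.val_injective.comp e.symm.injective,
      fun j => ht't (e.symm j).2⟩
  · rintro ⟨u, hu, hut⟩
    calc (k : ℕ∞) = ENat.card (Fin k) := by simp
      _ ≤ (range u).encard := hu.encard_range
      _ ≤ t.encard := encard_le_encard (range_subset_iff.mpr hut)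

theorem _root_.Function.update_eq_sumElim_comp {α β γ : Type*} [DecidableEq α] (a : α → γ)
    (u : β → γ) (i : α) (j : β) :
    Function.update a i (u j) =
      Sum.elim a u ∘ fun x => if x = i then Sum.inr j else Sum.inl x := by
  ext x
  by_cases h : x = i <;> simp [h]

theorem _root_.MeasurableSpace.mem_iff_mem_of_measurableSet_generateFrom {β : Type*}
    {C : Set (Set β)} {x y : β} (h : ∀ s ∈ C, x ∈ s ↔ y ∈ s) {s : Set β}
    (hs : MeasurableSet[MeasurableSpace.generateFrom C] s) : x ∈ s ↔ y ∈ s :=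
  MeasurableSpace.generateFrom_induction C (fun s _ => x ∈ s ↔ y ∈ s) (fun t ht _ => h t ht)
    Iff.rfl (fun _ _ h => not_congr h)
    (fun _ _ h => by simp only [mem_iUnion]; exact exists_congr h) s hs

theorem _root_.MeasureTheory.exists_measure_image_inter_pos {α β ι : Type*} [Countable ι]
    {_ : MeasurableSpace β} {μ : Measure β} (f : α → β) {E : Set α} {S : ι → Set α}
    (hES : E ⊆ ⋃ k, S k) (hE : 0 < μ (f '' E)) : ∃ k, 0 < μ (f '' (E ∩ S k)) := by
  by_contra! h
  have hcover : f '' E = ⋃ k, f '' (E ∩ S k) := by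
    rw [← image_iUnion, ← inter_iUnion, inter_eq_left.mpr hES]
  exact hE.ne' (hcover ▸ measure_iUnion_null fun k => nonpos_iff_eq_zero.mp (h k))

section Definability

open Language Function

variable {L M} {A : Set M} {α : Type*}

theorem _root_.Set.definable_iff_exists_formula_fin {s : Set (α → M)} :
    A.Definable L s ↔ ∃ (m : ℕ) (φ : L.Formula (Fin m ⊕ α)) (q : Fin m → M),
      (∀ j, q j ∈ A) ∧ s = {v | φ.Realize (Sum.elim q v)} := by
  constructor
  · rw [definable_iff_finitely_definable]
    rintro ⟨A₀, hA₀, hs⟩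
    obtain ⟨φ, rfl⟩ := definable_iff_exists_formula_sum.mp hs
    let e := Fintype.equivFin (A₀ : Set M)
    refine ⟨_, φ.relabel (Sum.map e id), fun j => e.symm j, fun j => hA₀ (e.symm j).2, ?_⟩
    ext v
    simp only [mem_ofPred_eq, Formula.realize_relabel, Sum.elim_comp_map]
    congr! 2
    ext x
    simp
  · rintro ⟨m, φ, q, hq, rfl⟩
    refine definable_iff_exists_formula_sum.mpr
      ⟨φ.relabel (Sum.map (fun j => ⟨q j, hq j⟩) id), ?_⟩
    ext v
    simp only [mem_ofPred_eq, Formula.realize_relabel, Sum.elim_comp_map]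
    rfl

variable [Countable (Σ l, L.Functions l)] [Countable (Σ l, L.Relations l)] in
theorem _root_.Set.Countable.setOf_definable [Countable α] (hA : A.Countable) :
    {s : Set (α → M) | A.Definable L s}.Countable := by
  have := hA.to_subtype
  refine (countable_range fun φ : L.Formula (A ⊕ α) => {v | φ.Realize (Sum.elim (↑) v)}).mono ?_
  intro s hs
  obtain ⟨φ, rfl⟩ := definable_iff_exists_formula_sum.mp hs
  exact ⟨φ, rfl⟩

variable [Countable (Σ l, L.Functions l)] [Countable (Σ l, L.Relations l)] in
theorem _root_.Set.Countable.setOf_definable₁ (hA : A.Countable) :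
    {s : Set M | A.Definable₁ L s}.Countable := by
  refine (hA.setOf_definable (L := L) (α := Fin 1)).preimage fun s s' h => ?_
  ext b
  exact Set.ext_iff.mp h fun _ => b

theorem _root_.Set.definable₁_biInter_finset {ι : Type*} {f : ι → Set M}
    (hf : ∀ i, A.Definable₁ L (f i)) (T : Finset ι) : A.Definable₁ L (⋂ i ∈ T, f i) := by
  unfold Definable₁
  convert definable_biInter_finset hf T using 1
  ext
  simp

theorem _root_.Set.definable_setOf_apply_eq (A : Set M) (x y : α) :
    A.Definable L {w : α → M | w x = w y} :=
  ⟨(Term.var x).equal (Term.var y), by ext; simp⟩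

variable [DecidableEq α] {s : Set (α → M)}

theorem _root_.Set.Definable.setOf_forall_update (hs : A.Definable L s) (i : α) :
    A.Definable L {a | ∀ b, update a i b ∈ s} := by
  convert (hs.preimage_comp fun x => if x = i then Sum.inr (0 : Fin 1) else Sum.inl x
    ).forall_of_finite using 1
  ext a
  simp only [mem_ofPred_eq, mem_preimage, ← update_eq_sumElim_comp]
  exact ⟨fun h u => h (u 0), fun h b => h fun _ => b⟩

theorem _root_.Set.Definable.setOf_le_encard_update (hs : A.Definable L s) (i : α) (k : ℕ) :
    A.Definable L {a | (k : ℕ∞) ≤ {b | update a i b ∈ s}.encard} := by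
  let S : Set ((α ⊕ Fin k) → M) :=
    (⋂ j, (· ∘ fun x => if x = i then Sum.inr j else Sum.inl x) ⁻¹' s) ∩
      ⋂ p : {p : Fin k × Fin k // p.1 ≠ p.2}, {w | w (Sum.inr p.1.1) = w (Sum.inr p.1.2)}ᶜ
  have hS : A.Definable L S :=
    (definable_iInter_of_finite fun j => hs.preimage_comp _).inter
      (definable_iInter_of_finite fun p => (definable_setOf_apply_eq A _ _).compl)
  convert hS.exists_of_finite using 1
  ext a
  simp only [mem_ofPred_eq, le_encard_iff_exists_injective, S, mem_inter_iff, mem_iInter,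
    mem_preimage, ← update_eq_sumElim_comp, mem_compl_iff, Sum.elim_inr]
  refine exists_congr fun u => and_comm.trans (and_congr_right' ⟨?_, ?_⟩)
  · exact fun hu p h => p.2 (hu h)
  · exact fun hu j j' h => by_contra fun hjj' => hu ⟨(j, j'), hjj'⟩ h

theorem _root_.Set.Definable.setOf_encard_update_eq (hs : A.Definable L s) (i : α) (k : ℕ) :
    A.Definable L {a | {b | update a i b ∈ s}.encard = k} := by
  convert (hs.setOf_le_encard_update i k).inter (hs.setOf_le_encard_update i (k + 1)).compl
    using 1
  ext a
  simp only [mem_inter_iff, mem_ofPred_eq, mem_compl_iff, not_le, Nat.cast_succ,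
    ENat.lt_add_one_iff (ENat.natCast_ne_top k)]
  exact le_antisymm_iff.trans and_comm

theorem _root_.Set.definable₁_union_image_iff [Finite α] (a : α → M) (i : α) {s : Set M} :
    (A ∪ a '' {j | j ≠ i}).Definable₁ L s ↔
      ∃ D : Set (α → M), A.Definable L D ∧ s = {b | update a i b ∈ D} := by
  constructor
  · intro hs
    obtain ⟨φ, hφ⟩ := definable_iff_exists_formula_sum.mp hs
    have hparam (z : ↥(A ∪ a '' {j | j ≠ i})) :
        ∃ c : A ⊕ {j // j ≠ i}, Sum.elim (fun x : A => (x : M)) (fun j => a j) c = z := by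
      obtain ⟨z, hz | ⟨j, hj, rfl⟩⟩ := z
      exacts [⟨Sum.inl ⟨z, hz⟩, rfl⟩, ⟨Sum.inr ⟨j, hj⟩, rfl⟩]
    choose e he using hparam
    let g : ↥(A ∪ a '' {j | j ≠ i}) ⊕ Fin 1 → A ⊕ α :=
      Sum.elim (fun z => Sum.map id Subtype.val (e z)) fun _ => Sum.inr i
    refine ⟨{w | φ.Realize (Sum.elim (↑) w ∘ g)},
      definable_iff_exists_formula_sum.mpr ⟨φ.relabel g, by ext; simp⟩, ?_⟩
    ext b
    have hg : Sum.elim (↑) (update a i b) ∘ g = Sum.elim (↑) fun _ => b := by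
      ext (z | _)
      · simp only [comp_apply, g, Sum.elim_inl, ← he z]
        rcases e z with x | ⟨j, hj⟩
        · rfl
        · exact update_of_ne hj _ _
      · simp [g]
    simp only [mem_ofPred_eq, hg]
    exact Set.ext_iff.mp hφ fun _ => b
  · rintro ⟨D, hD, rfl⟩
    refine (hD.mono subset_union_left).preimage_map fun j => ?_
    by_cases h : j = i
    · subst h
      simpa using DefinableFun.proj (L := L) (i := (0 : Fin 1))
    · simpa [h] using definableFun_const L (a := a j) (Fin 1) (Or.inr ⟨j, h, rfl⟩)

end Definability

section Types

open Language Function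

variable {L M}

theorem mem_typeRealizations_iff {Z : Set M} {c b : M} :
    b ∈ typeRealizations L M Z c ↔ ∀ s : Set M, Z.Definable₁ L s → c ∈ s → b ∈ s := by
  have hfin1 (v : Fin 1 → M) : (fun _ => v 0) = v := funext fun j => by rw [Fin.fin_one_eq_zero j]
  simp only [typeRealizations, Definable₁, definable_iff_exists_formula_fin]
  constructor
  · rintro h s ⟨m, φ, q, hq, hs⟩ hc
    exact (Set.ext_iff.mp hs fun _ => b).mpr (h m φ q hq ((Set.ext_iff.mp hs fun _ => c).mp hc))
  · intro h m χ q hq hχ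
    refine h {b | χ.Realize (Sum.elim q fun _ => b)} ⟨m, χ, q, hq, ?_⟩ hχ
    ext v
    simp only [mem_ofPred_eq, hfin1]

theorem isolatesTypeOver_iff {Z S : Set M} {c : M} :
    IsolatesTypeOver L M Z S c ↔ c ∈ S ∧ S ⊆ typeRealizations L M Z c :=
  and_congr_right' ⟨fun h b hb m χ q hq hχ => h m χ q hq hχ b hb,
    fun h m χ q hq hχ _ hb => h hb m χ q hq hχ⟩

theorem Aleph1Saturated.exists_forall_mem (hsat : Aleph1Saturated L M) {ι : Type*}
    [Countable ι] {s : ι → Set M} (hs : ∀ k, (univ : Set M).Definable₁ L (s k))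
    (hfip : ∀ T : Finset ι, ∃ c, ∀ k ∈ T, c ∈ s k) : ∃ c, ∀ k, c ∈ s k := by
  classical
  have hformula (k : ι) :
      ∃ φ : L.Formula (M ⊕ Fin 1), ∀ c, φ.Realize (Sum.elim id fun _ => c) ↔ c ∈ s k := by
    obtain ⟨φ, hφ⟩ := definable_iff_exists_formula_sum.mp (hs k)
    refine ⟨φ.relabel (Sum.map Subtype.val id), fun c => ?_⟩
    rw [Formula.realize_relabel, Sum.elim_comp_map]
    exact (Set.ext_iff.mp hφ fun _ => c).symm
  choose φ hφ using hformula
  obtain ⟨c, hc⟩ := hsat (range φ) (countable_range φ) fun T hT => by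
    rw [← image_univ] at hT
    obtain ⟨T', -, rfl⟩ := Finset.subset_set_image_iff.mp hT
    obtain ⟨c, hc⟩ := hfip T'
    exact ⟨c, by simpa [hφ] using hc⟩
  exact ⟨c, fun k => (hφ k c).mp (hc _ (mem_range_self k))⟩

theorem Aleph1Saturated.exists_definable₁_subset_typeRealizations
    [Countable (Σ l, L.Functions l)] [Countable (Σ l, L.Relations l)]
    (hsat : Aleph1Saturated L M) {Z : Set M} (hZ : Z.Countable) {c : M}
    (hfin : (typeRealizations L M Z c).Finite) :
    ∃ s, Z.Definable₁ L s ∧ c ∈ s ∧ s ⊆ typeRealizations L M Z c := by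
  set R := typeRealizations L M Z c
  by_contra! h
  -- Otherwise the type of `c` together with `x ≠ b` for all `b ∈ R` is finitely satisfiable.
  let ι := {s : Set M | Z.Definable₁ L s ∧ c ∈ s}
  have : Countable ι := ((hZ.setOf_definable₁ (L := L)).mono fun _ hs => hs.1).to_subtype
  have : Countable R := hfin.countable.to_subtype
  let s : ι ⊕ R → Set M := Sum.elim (fun t => t.1) fun b => {b.1}ᶜ
  have hs (k : ι ⊕ R) : (univ : Set M).Definable₁ L (s k) := by
    rcases k with t | b
    · exact t.2.1.mono (subset_univ Z)
    · exact (Definable.singleton_of_mem (L := L) (mem_univ b.1)).compl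
  have hfip (T : Finset (ι ⊕ R)) : ∃ d, ∀ k ∈ T, d ∈ s k := by
    let t := ⋂ k ∈ T, Sum.elim (fun t : ι => t.1) (fun _ => univ) k
    have ht : Z.Definable₁ L t := by
      refine definable₁_biInter_finset (fun k => ?_) T
      rcases k with t | _
      · exact t.2.1
      · exact definable_univ
    have hct : c ∈ t := mem_iInter₂.mpr fun k _ => by rcases k with t | _; exacts [t.2.2, trivial]
    obtain ⟨d, hdt, hdR⟩ := not_subset.mp (h t ht hct)
    refine ⟨d, ?_⟩
    rintro (t' | b) hk
    · exact mem_iInter₂.mp hdt _ hk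
    · exact fun hdb => hdR (hdb ▸ b.2)
  obtain ⟨d, hd⟩ := hsat.exists_forall_mem hs hfip
  have hdR : d ∈ R := mem_typeRealizations_iff.mpr fun t ht hct => hd (Sum.inl ⟨t, ht, hct⟩)
  exact hd (Sum.inr ⟨d, hdR⟩) rfl

variable {α : Type*} [DecidableEq α]

theorem mem_typeRealizations_iff_update [Finite α] {A : Set M} {a : α → M} {i : α} {b : M} :
    b ∈ typeRealizations L M (A ∪ a '' {j | j ≠ i}) (a i) ↔
      ∀ D, A.Definable L D → a ∈ D → update a i b ∈ D := by
  rw [mem_typeRealizations_iff]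
  constructor
  · intro h D hD ha
    exact h _ ((definable₁_union_image_iff a i).mpr ⟨D, hD, rfl⟩) (by simpa using ha)
  · rintro h s hs hi
    obtain ⟨D, hD, rfl⟩ := (definable₁_union_image_iff a i).mp hs
    exact h D hD (by simpa using hi)

theorem finite_typeRealizations_of_mem [Finite α] {A : Set M} {E : Set (α → M)}
    (hE : MeasurableSet[MeasurableSpace.generateFrom {s | A.Definable L s}] E)
    {a : α → M} (ha : a ∈ E) (i : α) (hfin : {b | update a i b ∈ E}.Finite) :
    (typeRealizations L M (A ∪ a '' {j | j ≠ i}) (a i)).Finite := by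
  refine hfin.subset fun b hb => ?_
  have hsame (D : Set (α → M)) (hD : A.Definable L D) : a ∈ D ↔ update a i b ∈ D :=
    ⟨mem_typeRealizations_iff_update.mp hb D hD, fun h => by_contra fun haD =>
      mem_typeRealizations_iff_update.mp hb Dᶜ hD.compl haD h⟩
  exact (MeasurableSpace.mem_iff_mem_of_measurableSet_generateFrom hsame hE).mp ha

variable (L) in
/-- The tuples `a` at which `D`, read as a formula in its `i`-th variable with the other
coordinates of `a` as parameters, isolates the type of `a i` over `A` and those coordinates,
and has exactly `r` solutions. -/
def isolatingLocus (A : Set M) (i : α) (D : Set (α → M)) (r : ℕ) : Set (α → M) :=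
  {a | a ∈ D ∧ (∀ D', A.Definable L D' → a ∈ D' → ∀ b, update a i b ∈ D → update a i b ∈ D') ∧
    {b | update a i b ∈ D}.encard = r}

theorem setOf_update_mem_eq_typeRealizations [Finite α] {A : Set M} {i : α}
    {D : Set (α → M)} {r : ℕ} (hD : A.Definable L D) {a : α → M}
    (ha : a ∈ isolatingLocus L A i D r) :
    {b | update a i b ∈ D} = typeRealizations L M (A ∪ a '' {j | j ≠ i}) (a i) := by
  ext b
  rw [mem_ofPred_eq, mem_typeRealizations_iff_update]
  exact ⟨fun hb D' hD' haD' => ha.2.1 D' hD' haD' b hb, fun h => h D hD ha.1⟩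

variable [Countable (Σ l, L.Functions l)] [Countable (Σ l, L.Relations l)] [Finite α]

theorem Aleph1Saturated.exists_mem_isolatingLocus (hsat : Aleph1Saturated L M) {A : Set M}
    (hA : A.Countable) (a : α → M) (i : α)
    (hfin : (typeRealizations L M (A ∪ a '' {j | j ≠ i}) (a i)).Finite) :
    ∃ D, A.Definable L D ∧
      a ∈ isolatingLocus L A i D (typeRealizations L M (A ∪ a '' {j | j ≠ i}) (a i)).ncard := by
  obtain ⟨s, hs, his, hsR⟩ :=
    hsat.exists_definable₁_subset_typeRealizations (hA.union (toFinite _).countable) hfin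
  obtain ⟨D, hD, rfl⟩ := (definable₁_union_image_iff a i).mp hs
  have haD : a ∈ D := by simpa using his
  have hslice : {b | update a i b ∈ D} = typeRealizations L M (A ∪ a '' {j | j ≠ i}) (a i) :=
    hsR.antisymm fun b hb => mem_typeRealizations_iff_update.mp hb D hD haD
  refine ⟨D, hD, haD, fun D' hD' haD' b hb =>
    mem_typeRealizations_iff_update.mp (hsR hb) D' hD' haD', ?_⟩
  rw [hslice, hfin.cast_ncard_eq]

theorem exists_seq_definable_iInter_eq_isolatingLocus {A : Set M} (hA : A.Countable) (i : α)
    {D : Set (α → M)} (hD : A.Definable L D) (r : ℕ) :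
    ∃ F : ℕ → Set (α → M), (∀ k, A.Definable L (F k)) ∧ ⋂ k, F k = isolatingLocus L A i D r := by
  let implies (D' : Set (α → M)) : Set (α → M) :=
    {a | a ∈ D' → ∀ b, update a i b ∈ D → update a i b ∈ D'}
  let 𝒞 := insert D (insert {a | {b | update a i b ∈ D}.encard = r}
    (implies '' {D' | A.Definable L D'}))
  have h𝒞 : 𝒞.Countable := (((hA.setOf_definable (L := L)).image implies).insert _).insert _
  obtain ⟨F, hF⟩ := h𝒞.exists_eq_range (insert_nonempty _ _)
  refine ⟨F, fun k => ?_, ?_⟩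
  · have hk : F k ∈ 𝒞 := hF ▸ mem_range_self k
    rcases hk with hk | hk | ⟨D', hD', hk⟩
    · exact hk ▸ hD
    · exact hk ▸ hD.setOf_encard_update_eq i r
    · rw [← hk]
      convert hD'.compl.union ((hD.compl.union hD').setOf_forall_update i) using 1
      ext a
      simp only [implies, mem_ofPred_eq, mem_union, mem_compl_iff, imp_iff_not_or]
  · rw [← sInter_range, ← hF]
    ext a
    simp only [𝒞, implies, sInter_insert, sInter_image, mem_inter_iff, mem_iInter, mem_ofPred_eq,
      isolatingLocus]
    tauto

end Types

/-- **Lemma 2.6(1)**: if `E ∈ B_V(X)` with `ν^J(π_J(E)) > 0` and fibres of `π_J` on `E`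
of size at most `l`, then there are `F ⊆ E` (a countable intersection of `X`-definable sets
with `E`), `r ∈ ℕ` and an `L(X)`-formula `ψ` such that `ν^J(π_J(F)) > 0` and for all
`ā ∈ F`, `ψ(ā_J, x_n)` isolates `tp(a_n/ā_J X)`, which has exactly `r` realizations. -/
theorem lemma_isolating_formula
    (L : FirstOrder.Language) (M : Type*) [L.Structure M]
    [Countable (Σ l, L.Functions l)] [Countable (Σ l, L.Relations l)]
    (hsat : Aleph1Saturated L M)
    (n : ℕ) (hn : 2 ≤ n)
    (ν : @Measure (Fin n → M) (defSigma L M (Fin n)))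
    (X : Set M) (hXc : X.Countable)
    (E : Set (Fin n → M))
    (hEX : MeasurableSet[MeasurableSpace.generateFrom
      {s : Set (Fin n → M) | X.Definable L s}] E)
    (ha : 0 < nuI L M n ν (Jset n hn) (proj M n (Jset n hn) '' E))
    (l : ℕ)
    (hb : ∀ a ∈ E,
      (proj M n (Jset n hn) ⁻¹' {proj M n (Jset n hn) a} ∩ E).Finite ∧
      (proj M n (Jset n hn) ⁻¹' {proj M n (Jset n hn) a} ∩ E).ncard ≤ l) :
    ∃ (Fseq : ℕ → Set (Fin n → M)) (r m : ℕ)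
      (ψ : L.Formula (Fin m ⊕ Fin n)) (p : Fin m → M),
      (∀ i : ℕ, X.Definable L (Fseq i)) ∧ (∀ i : Fin m, p i ∈ X) ∧
      0 < nuI L M n ν (Jset n hn)
        (proj M n (Jset n hn) '' (E ∩ ⋂ i : ℕ, Fseq i)) ∧
      ∀ a ∈ E ∩ ⋂ i : ℕ, Fseq i,
        IsolatesTypeOver L M (X ∪ a '' {i : Fin n | i ≠ ⟨n - 1, by omega⟩})
          {b : M | ψ.Realize (Sum.elim p (Function.update a ⟨n - 1, by omega⟩ b))}
          (a ⟨n - 1, by omega⟩) ∧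
        (typeRealizations L M (X ∪ a '' {i : Fin n | i ≠ ⟨n - 1, by omega⟩})
          (a ⟨n - 1, by omega⟩)).Finite ∧
        (typeRealizations L M (X ∪ a '' {i : Fin n | i ≠ ⟨n - 1, by omega⟩})
          (a ⟨n - 1, by omega⟩)).ncard = r := by
  set last : Fin n := ⟨n - 1, by omega⟩
  have hproj (a : Fin n → M) (b : M) :
      proj M n (Jset n hn) (Function.update a last b) = proj M n (Jset n hn) a :=
    funext fun j => Function.update_of_ne (by simpa [Jset] using j.2) _ _
  have hcover : E ⊆ ⋃ k : {D : Set (Fin n → M) | X.Definable L D} × ℕ,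
      isolatingLocus L X last k.1 k.2 := by
    intro a haE
    have hfib : {b | Function.update a last b ∈ E}.Finite :=
      ((hb a haE).1.preimage (Function.update_injective a last).injOn).subset
        fun b hbE => ⟨hproj a b, hbE⟩
    obtain ⟨D, hD, haD⟩ := hsat.exists_mem_isolatingLocus hXc a last
      (finite_typeRealizations_of_mem hEX haE last hfib)
    exact mem_iUnion.mpr ⟨(⟨D, hD⟩, _), haD⟩
  have := (hXc.setOf_definable (L := L) (α := Fin n)).to_subtype
  obtain ⟨⟨⟨D, hD⟩, r⟩, hpos⟩ := exists_measure_image_inter_pos _ hcover ha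
  obtain ⟨F, hFdef, hF⟩ := exists_seq_definable_iInter_eq_isolatingLocus hXc last hD r
  obtain ⟨m, ψ, p, hp, rfl⟩ := definable_iff_exists_formula_fin.mp hD
  refine ⟨F, r, m, ψ, p, hFdef, hp, hF ▸ hpos, fun a ha => ?_⟩
  rw [hF] at ha
  have hR := setOf_update_mem_eq_typeRealizations hD ha.2
  obtain ⟨haD, -, hr⟩ := ha.2
  rw [hR] at hr
  refine ⟨isolatesTypeOver_iff.mpr ⟨?_, hR.subset⟩, finite_of_encard_eq_coe hr, ?_⟩
  · rwa [mem_ofPred_eq, Function.update_eq_self]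
  · rw [ncard_def, hr, ENat.toNat_natCast]

end MeasureAmalgamation
end

section
/- Let J = {1,…,n−1}. Suppose E ∈ B_V satisfies ν^J(π_J(E)) > 0 and there is l ∈ ℕ such that for every ā ∈ E the fibre π_J⁻¹(π_J(ā)) ∩ E has at most l elements. Among all countable parameter sets X over which E is definable, together with associated data (F, r, ψ) as in the previous lemma (F ⊆ E a countable intersection of X-definable sets with E, ν^J(π_J(F)) > 0, and for all ā ∈ F the formula ψ(ā_J, x_n) isolates tp(a_n/ā_J X), which has exactly r realizations), choose X so that r is minimal. Then for every countable Y ⊇ X and for ν^J-almost all ā_J ∈ π_J(F): whenever (ā_J, a_n) ∈ F, the formula ψ(ā_J, x_n) isolates the complete type of a_n over Y ∪ {a₁,…,a_{n−1}} in 𝓜 (and therefore this type has the same realizations as tp(a_n/ā_J X)). -/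
open FirstOrder MeasureTheory Set
open scoped ENNReal

namespace MeasureAmalgamation

variable (L : FirstOrder.Language) (M : Type*) [L.Structure M]

variable (n : ℕ)

/-- Extend a `J`-tuple `z` to a `V`-tuple by putting `b` in the last coordinate. -/
def extJ (n : ℕ) (hn : 2 ≤ n) (z : ↥(Jset n hn) → M) (b : M) : Fin n → M :=
  fun i => if h : i ∈ Jset n hn then z ⟨i, h⟩ else b

/-- The data produced by Lemma 2.6(1): a countable parameter set `X` over which `E` is
definable, a countable intersection `F = E ∩ ⋂ᵢ Fᵢ` of `X`-definable sets with `E` with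
`ν^J(π_J F) > 0`, and an `L(X)`-formula `ψ` such that for all `ā ∈ F`, `ψ(ā_J, xₙ)`
isolates `tp(aₙ/ā_J X)`, which has exactly `r` realizations. -/
def LemmaData (L : FirstOrder.Language) (M : Type*) [L.Structure M]
    (n : ℕ) (hn : 2 ≤ n) (ν : @Measure (Fin n → M) (defSigma L M (Fin n)))
    (E : Set (Fin n → M)) (X : Set M) (Fseq : ℕ → Set (Fin n → M)) (r m : ℕ)
    (ψ : L.Formula (Fin m ⊕ Fin n)) (p : Fin m → M) : Prop :=
  X.Countable ∧
  MeasurableSet[MeasurableSpace.generateFrom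
    {s : Set (Fin n → M) | X.Definable L s}] E ∧
  (∀ i : ℕ, X.Definable L (Fseq i)) ∧ (∀ i : Fin m, p i ∈ X) ∧
  0 < nuI L M n ν (Jset n hn) (proj M n (Jset n hn) '' (E ∩ ⋂ i : ℕ, Fseq i)) ∧
  ∀ a ∈ E ∩ ⋂ i : ℕ, Fseq i,
    IsolatesTypeOver L M (X ∪ a '' {i : Fin n | i ≠ ⟨n - 1, by omega⟩})
      {b : M | ψ.Realize (Sum.elim p (Function.update a ⟨n - 1, by omega⟩ b))}
      (a ⟨n - 1, by omega⟩) ∧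
    (typeRealizations L M (X ∪ a '' {i : Fin n | i ≠ ⟨n - 1, by omega⟩})
      (a ⟨n - 1, by omega⟩)).Finite ∧
    (typeRealizations L M (X ∪ a '' {i : Fin n | i ≠ ⟨n - 1, by omega⟩})
      (a ⟨n - 1, by omega⟩)).ncard = r


section Helpers

variable {L : FirstOrder.Language} {M : Type*} [L.Structure M]

lemma countable_formula (α : Type*) [Countable α] [Countable (Σ l, L.Functions l)]
    [Countable (Σ l, L.Relations l)] : Countable (L.Formula α) := by
  have h1 : Countable (Σ n, L.BoundedFormula α n) :=
    (Language.BoundedFormula.listEncode_sigma_injective (L := L) (α := α)).countable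
  exact Function.Injective.countable
    (f := fun φ : L.Formula α => (⟨0, φ⟩ : Σ n, L.BoundedFormula α n))
    (fun a b h => by simpa using h)

lemma self_mem_typeRealizations (A : Set M) (a : M) : a ∈ typeRealizations L M A a :=
  fun _ _ _ _ h => h

lemma typeRealizations_antitone {A B : Set M} (h : A ⊆ B) (a : M) :
    typeRealizations L M B a ⊆ typeRealizations L M A a :=
  fun _ hc m χ q hq => hc m χ q (fun i => h (hq i))

/-- G1: transfer of satisfaction of an `n`-slot formula along type realization. -/
lemma realize_update_of_mem_typeRealizations
    {n k : ℕ} (φ : L.Formula (Fin k ⊕ Fin n)) (u : Fin k → M) (a : Fin n → M)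
    (lst j₀ : Fin n) (hj₀ : j₀ ≠ lst)
    (A : Set M) (hu : ∀ j, u j ∈ A) (ha : ∀ i, i ≠ lst → a i ∈ A)
    {c : M} (hc : c ∈ typeRealizations L M A (a lst))
    (h : φ.Realize (Sum.elim u a)) :
    φ.Realize (Sum.elim u (Function.update a lst c)) := by
  classical
  set e := finSumFinEquiv (m := k) (n := n) with he
  set ρ : Fin k ⊕ Fin n → Fin (k + n) ⊕ Fin 1 := fun s =>
    match s with
    | .inl j => .inl (e (.inl j))
    | .inr i => if i = lst then .inr 0 else .inl (e (.inr i))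
  set q : Fin (k + n) → M :=
    fun t => Sum.elim u (fun i => if i = lst then a j₀ else a i) (e.symm t) with hq
  have hqA : ∀ t, q t ∈ A := by
    intro t
    have hqt : q t = Sum.elim u (fun i => if i = lst then a j₀ else a i) (e.symm t) := rfl
    rw [hqt]
    rcases e.symm t with j | i
    · exact hu j
    · dsimp only [Sum.elim_inr]
      by_cases hi : i = lst
      · rw [if_pos hi]; exact ha j₀ hj₀
      · rw [if_neg hi]; exact ha i hi
  have key : ∀ x : M, (φ.relabel ρ).Realize (Sum.elim q fun _ : Fin 1 => x) ↔
      φ.Realize (Sum.elim u (Function.update a lst x)) := by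
    intro x
    rw [Language.Formula.realize_relabel]
    apply iff_of_eq
    congr 1
    funext s
    rcases s with j | i
    · simp [ρ, hq]
    · by_cases hi : i = lst
      · simp [ρ, hi]
      · simp [ρ, hi, hq, Function.update_apply]
  have h0 : (φ.relabel ρ).Realize (Sum.elim q fun _ : Fin 1 => a lst) := by
    rw [key]
    rwa [Function.update_eq_self]
  exact (key c).1 (hc (k + n) (φ.relabel ρ) q hqA h0)

/-- G2: converting a one-variable formula with parameters in `A ∪ (coords of a)` into an
`n`-slot formula with parameters in `A`. -/
lemma exists_formula_of_params_union
    {n mh : ℕ} (χ : L.Formula (Fin mh ⊕ Fin 1)) (q : Fin mh → M) (a : Fin n → M)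
    (lst : Fin n) (A : Set M) (w : M) (hw : w ∈ A)
    (hq : ∀ j, q j ∈ A ∪ a '' {i | i ≠ lst}) :
    ∃ (φ : L.Formula (Fin mh ⊕ Fin n)) (u : Fin mh → M), (∀ j, u j ∈ A) ∧
      ∀ c : M, φ.Realize (Sum.elim u (Function.update a lst c)) ↔
        χ.Realize (Sum.elim q fun _ => c) := by
  classical
  have hch : ∀ j : Fin mh, q j ∉ A → ∃ i : Fin n, i ≠ lst ∧ a i = q j := by
    intro j hj
    rcases hq j with h | h
    · exact absurd h hj
    · rcases h with ⟨i, hi, hai⟩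
      exact ⟨i, hi, hai⟩
  set d : Fin mh → Fin mh ⊕ Fin n := fun j =>
    if h : q j ∈ A then .inl j else .inr (hch j h).choose
  refine ⟨χ.relabel (Sum.elim d fun _ => .inr lst),
    fun j => if q j ∈ A then q j else w, fun j => ?_, fun c => ?_⟩
  · by_cases h : q j ∈ A <;> simp [h, hw]
  · rw [Language.Formula.realize_relabel]
    apply iff_of_eq
    congr 1
    funext s
    rcases s with j | i
    · by_cases h : q j ∈ A
      · simp only [d, Function.comp_apply, Sum.elim_inl, h, dite_true, if_true]
      · have := (hch j h).choose_spec
        simp only [d, Function.comp_apply, Sum.elim_inl, h, dite_false, Sum.elim_inr,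
          Sum.elim_inl]
        rw [Function.update_apply, if_neg this.1, this.2]
    · simp only [Function.comp_apply, Sum.elim_inr, Function.update_self]

/-- Conjunction of a list of formulas with parameters. -/
lemma exists_conj_formula {n : ℕ} (S : Set M)
    (l : List (Σ k : ℕ, L.Formula (Fin k ⊕ Fin n) × (Fin k → M)))
    (hl : ∀ x ∈ l, ∀ j, x.2.2 j ∈ S) :
    ∃ (K : ℕ) (Φ : L.Formula (Fin K ⊕ Fin n)) (U : Fin K → M), (∀ j, U j ∈ S) ∧
      ∀ v : Fin n → M, (Φ.Realize (Sum.elim U v) ↔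
        ∀ x ∈ l, x.2.1.Realize (Sum.elim x.2.2 v)) := by
  classical
  induction l with
  | nil =>
    exact ⟨0, ⊤, Fin.elim0, fun j => j.elim0, fun v => by simp⟩
  | cons hd tl ih =>
    obtain ⟨K, Φ, U, hU, hReal⟩ := ih (fun x hx => hl x (List.mem_cons_of_mem _ hx))
    obtain ⟨k, φ, u⟩ := hd
    refine ⟨k + K, (φ.relabel (Sum.map (Fin.castAdd K) id)) ⊓
      (Φ.relabel (Sum.map (Fin.natAdd k) id)), Fin.append u U, ?_, fun v => ?_⟩
    · intro j
      refine Fin.addCases (fun i => ?_) (fun i => ?_) j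
      · rw [Fin.append_left]
        exact hl ⟨k, φ, u⟩ (List.mem_cons_self (a := ⟨k, (φ, u)⟩) (l := tl)) i
      · rw [Fin.append_right]
        exact hU i
    · rw [Language.Formula.realize_inf, Language.Formula.realize_relabel,
        Language.Formula.realize_relabel]
      have e1 : (Sum.elim (Fin.append u U) v) ∘ (Sum.map (Fin.castAdd K) id) = Sum.elim u v := by
        funext s; rcases s with j | i
        · simp [Fin.append_left]
        · rfl
      have e2 : (Sum.elim (Fin.append u U) v) ∘ (Sum.map (Fin.natAdd k) id) = Sum.elim U v := by
        funext s; rcases s with j | i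
        · simp [Fin.append_right]
        · rfl
      rw [e1, e2, hReal]
      exact (List.forall_mem_cons (p := fun x => x.snd.1.Realize (Sum.elim x.snd.2 v)) (a := ⟨k, (φ, u)⟩) (l := tl)).symm

/-- Substituting the `lst` slot of an `n`-slot formula by a fresh variable. -/
noncomputable def updRel {n : ℕ} {β : Type*} (θ : L.Formula (β ⊕ Fin n)) (lst : Fin n) :
    L.Formula ((β ⊕ Fin n) ⊕ Fin 1) :=
  θ.relabel (fun s => match s with
    | .inl x => .inl (.inl x)
    | .inr j => if j = lst then .inr 0 else .inl (.inr j))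

lemma realize_updRel {n : ℕ} {β : Type*} (θ : L.Formula (β ⊕ Fin n)) (lst : Fin n)
    (u : β → M) (a : Fin n → M) (c : Fin 1 → M) :
    (updRel θ lst).Realize (Sum.elim (Sum.elim u a) c) ↔
      θ.Realize (Sum.elim u (Function.update a lst (c 0))) := by
  rw [updRel, Language.Formula.realize_relabel]
  apply iff_of_eq
  congr 1
  funext s
  rcases s with x | j
  · rfl
  · by_cases h : j = lst
    · simp [h]
    · simp [h, Function.update_apply]

lemma definable_of_formula_params {n : ℕ} {β : Type*} (A : Set M)
    (Φ : L.Formula (β ⊕ Fin n)) (U : β → M) (hU : ∀ j, U j ∈ A) :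
    A.Definable L {a : Fin n → M | Φ.Realize (Sum.elim U a)} := by
  rw [Set.definable_iff_exists_formula_sum]
  refine ⟨Φ.relabel (Sum.map (fun j => ⟨U j, hU j⟩) id), ?_⟩
  ext v
  rw [Set.mem_setOf_eq, Set.mem_setOf_eq, Language.Formula.realize_relabel]
  apply iff_of_eq
  congr 1
  funext s
  rcases s with j | i <;> rfl

lemma definable_dset {n : ℕ} {β₁ β₂ : Type*} (A : Set M) (lst : Fin n)
    (Ψ : L.Formula (β₁ ⊕ Fin n)) (P : β₁ → M) (hP : ∀ j, P j ∈ A)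
    (φ : L.Formula (β₂ ⊕ Fin n)) (u : β₂ → M) (hu : ∀ j, u j ∈ A) :
    A.Definable L {a : Fin n → M | φ.Realize (Sum.elim u a) →
      ∀ c : M, Ψ.Realize (Sum.elim P (Function.update a lst c)) →
        φ.Realize (Sum.elim u (Function.update a lst c))} := by
  classical
  set Φ : L.Formula ((β₂ ⊕ β₁) ⊕ Fin n) :=
    (φ.relabel (Sum.map Sum.inl id)).imp
      ((((updRel Ψ lst).relabel (Sum.map (Sum.map Sum.inr id) id)).imp
        ((updRel φ lst).relabel (Sum.map (Sum.map Sum.inl id) id))).iAlls (Fin 1)) with hΦ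
  have hset : {a : Fin n → M | φ.Realize (Sum.elim u a) →
      ∀ c : M, Ψ.Realize (Sum.elim P (Function.update a lst c)) →
        φ.Realize (Sum.elim u (Function.update a lst c))} =
      {a : Fin n → M | Φ.Realize (Sum.elim (Sum.elim u P) a)} := by
    ext a
    have e1 : (Sum.elim (Sum.elim u P) a) ∘ (Sum.map Sum.inl id) = Sum.elim u a := by
      funext s; rcases s with j | i <;> rfl
    have key : ∀ (i : Fin 1 → M),
        ((((updRel Ψ lst).relabel (Sum.map (Sum.map Sum.inr id) id)).imp
          ((updRel φ lst).relabel (Sum.map (Sum.map Sum.inl id) id))).Realize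
            (fun s => Sum.elim (Sum.elim (Sum.elim u P) a) i s)) ↔
        (Ψ.Realize (Sum.elim P (Function.update a lst (i 0))) →
          φ.Realize (Sum.elim u (Function.update a lst (i 0)))) := by
      intro i
      have e2 : ((fun s => Sum.elim (Sum.elim (Sum.elim u P) a) i s) ∘
          (Sum.map (Sum.map Sum.inr id) id)) = Sum.elim (Sum.elim P a) i := by
        funext s; rcases s with (x | i') | t <;> rfl
      have e3 : ((fun s => Sum.elim (Sum.elim (Sum.elim u P) a) i s) ∘
          (Sum.map (Sum.map Sum.inl id) id)) = Sum.elim (Sum.elim u a) i := by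
        funext s; rcases s with (x | i') | t <;> rfl
      rw [Language.Formula.realize_imp, Language.Formula.realize_relabel,
        Language.Formula.realize_relabel, e2, e3, realize_updRel, realize_updRel]
    rw [Set.mem_setOf_eq, Set.mem_setOf_eq, hΦ, Language.Formula.realize_imp,
      Language.Formula.realize_relabel, e1, Language.Formula.realize_iAlls]
    refine imp_congr Iff.rfl ?_
    constructor
    · intro h i
      rw [key i]
      exact h (i 0)
    · intro h c
      have h' := h (fun _ => c)
      rw [key] at h'
      exact h'
  rw [hset]
  exact definable_of_formula_params A Φ (Sum.elim u P)
    (fun j => by rcases j with j | j; exacts [hu j, hP j])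

lemma formula_realize_iInf {α γ : Type*} (s : Finset γ) (f : γ → L.Formula α) (v : α → M) :
    Language.Formula.Realize (M := M) (Language.BoundedFormula.iInf (f ∘ (Subtype.val : ↥s → γ))) v ↔
      ∀ b ∈ s, (f b).Realize v :=
  Language.BoundedFormula.realize_iInf.trans ⟨fun h b hb => h ⟨b, hb⟩, fun h b => h b b.2⟩

lemma formula_realize_iSup {α γ : Type*} (s : Finset γ) (f : γ → L.Formula α) (v : α → M) :
    Language.Formula.Realize (M := M) (Language.BoundedFormula.iSup (f ∘ (Subtype.val : ↥s → γ))) v ↔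
      ∃ b ∈ s, (f b).Realize v :=
  Language.BoundedFormula.realize_iSup.trans
    ⟨fun ⟨b, h⟩ => ⟨b, b.2, h⟩, fun ⟨b, hb, h⟩ => ⟨⟨b, hb⟩, h⟩⟩

lemma definable_count {n : ℕ} {β : Type*} (A : Set M) (lst : Fin n) (r : ℕ)
    (Ψ : L.Formula (β ⊕ Fin n)) (P : β → M) (hP : ∀ j, P j ∈ A) :
    A.Definable L {a : Fin n → M | ∃ g : Fin r → M, Function.Injective g ∧
      (∀ t, Ψ.Realize (Sum.elim P (Function.update a lst (g t)))) ∧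
      ∀ c : M, Ψ.Realize (Sum.elim P (Function.update a lst c)) → ∃ t, c = g t} := by
  classical
  set big : L.Formula ((β ⊕ Fin n) ⊕ Fin r) :=
    (Language.BoundedFormula.iInf ((fun t : Fin r =>
        (updRel Ψ lst).relabel (Sum.elim Sum.inl (fun _ => Sum.inr t))) ∘
          (Subtype.val : ↥(Finset.univ : Finset (Fin r)) → Fin r))) ⊓
    ((Language.BoundedFormula.iInf ((fun tt : Fin r × Fin r => if tt.1 = tt.2 then (⊤ : L.Formula ((β ⊕ Fin n) ⊕ Fin r)) else
          (Language.Term.equal (Language.Term.var (Sum.inr tt.1))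
            (Language.Term.var (Sum.inr tt.2))).not) ∘
          (Subtype.val : ↥(Finset.univ : Finset (Fin r × Fin r)) → Fin r × Fin r))) ⊓
      ((((updRel Ψ lst).relabel
          (Sum.elim (fun x => Sum.inl (Sum.inl x)) Sum.inr)).imp
        (Language.BoundedFormula.iSup ((fun t : Fin r =>
          Language.Term.equal (Language.Term.var (Sum.inr (0 : Fin 1)))
            (Language.Term.var (Sum.inl (Sum.inr t)))) ∘
              (Subtype.val : ↥(Finset.univ : Finset (Fin r)) → Fin r)))).iAlls (Fin 1))) with hbig
  have key : ∀ a : Fin n → M, ∀ g : Fin r → M,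
      big.Realize (Sum.elim (Sum.elim P a) g) ↔
        ((∀ t, Ψ.Realize (Sum.elim P (Function.update a lst (g t)))) ∧
         Function.Injective g ∧
         ∀ c : M, Ψ.Realize (Sum.elim P (Function.update a lst c)) → ∃ t, c = g t) := by
    intro a g
    rw [hbig, Language.Formula.realize_inf, Language.Formula.realize_inf]
    constructor
    · rintro ⟨h1, h2, h3⟩
      refine ⟨?_, ?_, ?_⟩
      · intro t
        have := (formula_realize_iInf _ _ _).1 h1 t (Finset.mem_univ t)
        rw [Language.Formula.realize_relabel] at this
        have e : (Sum.elim (Sum.elim P a) g ∘ Sum.elim Sum.inl (fun _ => Sum.inr t)) =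
            Sum.elim (Sum.elim P a) (fun _ : Fin 1 => g t) := by
          funext s; rcases s with x | i <;> rfl
        rw [e, realize_updRel] at this
        exact this
      · intro t1 t2 h12
        by_contra hne
        have := (formula_realize_iInf _ _ _).1 h2 (t1, t2) (Finset.mem_univ _)
        rw [if_neg hne] at this
        rw [Language.Formula.realize_not, Language.Formula.realize_equal] at this
        exact this (by simpa using h12)
      · intro c hc
        have h3' := (Language.Formula.realize_iAlls (β := Fin 1)).1 h3 (fun _ => c)
        rw [Language.Formula.realize_imp, Language.Formula.realize_relabel] at h3'
        have e : ((fun s => Sum.elim (Sum.elim (Sum.elim P a) g) (fun _ : Fin 1 => c) s) ∘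
            Sum.elim (fun x => Sum.inl (Sum.inl x)) Sum.inr) =
            Sum.elim (Sum.elim P a) (fun _ : Fin 1 => c) := by
          funext s; rcases s with x | i <;> rfl
        rw [e, realize_updRel] at h3'
        have h3'' := h3' hc
        rw [formula_realize_iSup] at h3''
        obtain ⟨t, _, ht⟩ := h3''
        rw [Language.Formula.realize_equal] at ht
        exact ⟨t, by simpa using ht⟩
    · rintro ⟨h1, h2, h3⟩
      refine ⟨?_, ?_, ?_⟩
      · rw [formula_realize_iInf]
        intro t _
        rw [Language.Formula.realize_relabel]
        have e : (Sum.elim (Sum.elim P a) g ∘ Sum.elim Sum.inl (fun _ => Sum.inr t)) =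
            Sum.elim (Sum.elim P a) (fun _ : Fin 1 => g t) := by
          funext s; rcases s with x | i <;> rfl
        rw [e, realize_updRel]
        exact h1 t
      · rw [formula_realize_iInf]
        intro tt _
        by_cases h : tt.1 = tt.2
        · rw [if_pos h, Language.Formula.realize_top]
          trivial
        · rw [if_neg h, Language.Formula.realize_not, Language.Formula.realize_equal]
          intro heq
          exact h (h2 (by simpa using heq))
      · rw [Language.Formula.realize_iAlls (β := Fin 1)]
        intro i
        rw [Language.Formula.realize_imp, Language.Formula.realize_relabel]
        have e : ((fun s => Sum.elim (Sum.elim (Sum.elim P a) g) i s) ∘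
            Sum.elim (fun x => Sum.inl (Sum.inl x)) Sum.inr) =
            Sum.elim (Sum.elim P a) i := by
          funext s; rcases s with x | i' <;> rfl
        rw [e, realize_updRel]
        intro hc
        rw [formula_realize_iSup]
        obtain ⟨t, ht⟩ := h3 (i 0) hc
        refine ⟨t, Finset.mem_univ t, ?_⟩
        rw [Language.Formula.realize_equal]
        simpa using ht
  have hset : {a : Fin n → M | ∃ g : Fin r → M, Function.Injective g ∧
      (∀ t, Ψ.Realize (Sum.elim P (Function.update a lst (g t)))) ∧
      ∀ c : M, Ψ.Realize (Sum.elim P (Function.update a lst c)) → ∃ t, c = g t} =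
      {a : Fin n → M | (big.iExs (Fin r)).Realize (Sum.elim P a)} := by
    ext a
    rw [Set.mem_setOf_eq, Set.mem_setOf_eq, Language.Formula.realize_iExs (γ := Fin r)]
    constructor
    · rintro ⟨g, hg1, hg2, hg3⟩
      refine ⟨g, ?_⟩
      have e : (fun s => Sum.elim (Sum.elim P a) g (id s)) = Sum.elim (Sum.elim P a) g := by
        funext s; rfl
      rw [key]
      exact ⟨hg2, hg1, hg3⟩
    · rintro ⟨g, hg⟩
      have e : (fun s => Sum.elim (Sum.elim P a) g (id s)) = Sum.elim (Sum.elim P a) g := by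
        funext s; rfl
      rw [key] at hg
      exact ⟨g, hg.2.1, hg.1, hg.2.2⟩
  rw [hset]
  exact definable_of_formula_params A (big.iExs (Fin r)) P hP

lemma exists_enum_of_ncard {S : Set M} (hf : S.Finite) {r : ℕ} (h : S.ncard = r) :
    ∃ g : Fin r → M, Function.Injective g ∧ Set.range g = S := by
  classical
  have hcard : hf.toFinset.card = r := by
    rw [← h, Set.ncard_eq_toFinset_card _ hf]
  set e := Finset.equivFinOfCardEq hcard
  refine ⟨fun t => (e.symm t : M), ?_, ?_⟩
  · intro t1 t2 ht
    exact e.symm.injective (Subtype.ext ht)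
  · ext c
    constructor
    · rintro ⟨t, rfl⟩
      exact hf.mem_toFinset.1 (e.symm t).2
    · intro hc
      exact ⟨e ⟨c, hf.mem_toFinset.2 hc⟩, by simp⟩

lemma ncard_range_inj {r : ℕ} (g : Fin r → M) (hg : Function.Injective g) :
    (Set.range g).ncard = r := by
  rw [← Set.image_univ, Set.ncard_image_of_injective _ hg, Set.ncard_univ,
    Nat.card_eq_fintype_card, Fintype.card_fin]

lemma realize_pairConj {n m K : ℕ} (ψ : L.Formula (Fin m ⊕ Fin n))
    (χ : L.Formula (Fin K ⊕ Fin n)) (p : Fin m → M) (u : Fin K → M) (v : Fin n → M) :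
    ((ψ.relabel (Sum.map (Fin.castAdd K) id)) ⊓
      (χ.relabel (Sum.map (Fin.natAdd m) id))).Realize (Sum.elim (Fin.append p u) v) ↔
    ψ.Realize (Sum.elim p v) ∧ χ.Realize (Sum.elim u v) := by
  rw [Language.Formula.realize_inf, Language.Formula.realize_relabel,
    Language.Formula.realize_relabel]
  have e1 : (Sum.elim (Fin.append p u) v) ∘ (Sum.map (Fin.castAdd K) id) = Sum.elim p v := by
    funext s; rcases s with j | i
    · simp [Fin.append_left]
    · rfl
  have e2 : (Sum.elim (Fin.append p u) v) ∘ (Sum.map (Fin.natAdd m) id) = Sum.elim u v := by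
    funext s; rcases s with j | i
    · simp [Fin.append_right]
    · rfl
  rw [e1, e2]

end Helpers

/-- **Lemma 2.6(2)**: if the data `(X, F, r, ψ)` of Lemma 2.6(1) is chosen with `r`
minimal, then for every countable `Y ⊇ X` and for `ν^J`-almost all `ā_J ∈ π_J(F)`:
whenever `(ā_J, aₙ) ∈ F`, the formula `ψ(ā_J, xₙ)` isolates `tp(aₙ/ā_J Y)`. -/
theorem lemma_isolating_formula_minimal
    (L : FirstOrder.Language) (M : Type*) [L.Structure M]
    [Countable (Σ l, L.Functions l)] [Countable (Σ l, L.Relations l)]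
    (hsat : Aleph1Saturated L M)
    (n : ℕ) (hn : 2 ≤ n)
    (ν : @Measure (Fin n → M) (defSigma L M (Fin n)))
    (hprob : ν Set.univ = 1)
    (hdef : DefinabilityCond L M n ν)
    (hfub : FubiniCond L M n ν)
    (E : Set (Fin n → M))
    (ha : 0 < nuI L M n ν (Jset n hn) (proj M n (Jset n hn) '' E))
    (l : ℕ)
    (hb : ∀ a ∈ E,
      (proj M n (Jset n hn) ⁻¹' {proj M n (Jset n hn) a} ∩ E).Finite ∧
      (proj M n (Jset n hn) ⁻¹' {proj M n (Jset n hn) a} ∩ E).ncard ≤ l)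
    (X : Set M) (Fseq : ℕ → Set (Fin n → M)) (r m : ℕ)
    (ψ : L.Formula (Fin m ⊕ Fin n)) (p : Fin m → M)
    (hdata : LemmaData L M n hn ν E X Fseq r m ψ p)
    (hmin : ∀ (X' : Set M) (Fseq' : ℕ → Set (Fin n → M)) (r' m' : ℕ)
      (ψ' : L.Formula (Fin m' ⊕ Fin n)) (p' : Fin m' → M),
      LemmaData L M n hn ν E X' Fseq' r' m' ψ' p' → r ≤ r') :
    ∀ Y : Set M, Y.Countable → X ⊆ Y →
      nuI L M n ν (Jset n hn)
        {z : ↥(Jset n hn) → M |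
          z ∈ proj M n (Jset n hn) '' (E ∩ ⋂ i : ℕ, Fseq i) ∧
          ∃ b : M, extJ M n hn z b ∈ E ∩ ⋂ i : ℕ, Fseq i ∧
            ¬ IsolatesTypeOver L M (Y ∪ Set.range fun i : ↥(Jset n hn) => z i)
              {c : M | ψ.Realize (Sum.elim p (extJ M n hn z c))} b} = 0 := by
  classical
  -- M is nonempty
  have hM : Nonempty M := by
    by_contra hM
    rw [not_nonempty_iff] at hM
    have huniv : (Set.univ : Set (Fin n → M)) = ∅ := by
      rw [Set.eq_empty_iff_forall_notMem]
      intro a _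
      exact (hM.false (a ⟨0, by omega⟩))
    rw [huniv] at hprob
    simp at hprob
  obtain ⟨w⟩ := hM
  suffices H : ∀ Y : Set M, Y.Countable → X ⊆ Y → w ∈ Y →
      nuI L M n ν (Jset n hn)
        {z : ↥(Jset n hn) → M |
          z ∈ proj M n (Jset n hn) '' (E ∩ ⋂ i : ℕ, Fseq i) ∧
          ∃ b : M, extJ M n hn z b ∈ E ∩ ⋂ i : ℕ, Fseq i ∧
            ¬ IsolatesTypeOver L M (Y ∪ Set.range fun i : ↥(Jset n hn) => z i)
              {c : M | ψ.Realize (Sum.elim p (extJ M n hn z c))} b} = 0 by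
    intro Y hYc hXY
    refine measure_mono_null ?_
      (H (insert w Y) (hYc.insert w) (hXY.trans (Set.subset_insert w Y)) (Set.mem_insert w Y))
    rintro z ⟨hz1, b, hb1, hb2⟩
    refine ⟨hz1, b, hb1, fun hIso => hb2 ⟨hIso.1, fun mm χ q hq => hIso.2 mm χ q
      (fun i => by rcases hq i with h | h
                   exacts [Or.inl (Set.mem_insert_of_mem w h), Or.inr h])⟩⟩
  clear ha hb hsat hdef hfub hprob
  intro Y hYc hXY hwY
  obtain ⟨hXc, hEmeas, hFdef, hpX, hpos, hmainD⟩ := hdata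
  set lst : Fin n := ⟨n - 1, by omega⟩ with hlstdef
  have hmemJ : ∀ i : Fin n, i ∈ Jset n hn ↔ i ≠ lst := by
    intro i
    rw [Jset, Finset.mem_compl, Finset.mem_singleton]
  have hj0 : (⟨0, by omega⟩ : Fin n) ≠ lst := by
    apply Fin.ne_of_val_ne
    simp only [hlstdef]
    omega
  have hext_last : ∀ (z : ↥(Jset n hn) → M) (b : M), extJ M n hn z b lst = b := by
    intro z b
    rw [extJ, dif_neg]
    rw [hmemJ]
    simp
  have hupd_ext : ∀ (z : ↥(Jset n hn) → M) (b c : M),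
      Function.update (extJ M n hn z b) lst c = extJ M n hn z c := by
    intro z b c
    funext i
    by_cases h : i ∈ Jset n hn
    · rw [Function.update_apply, if_neg ((hmemJ i).1 h), extJ, extJ, dif_pos h, dif_pos h]
    · have : i = lst := by
        by_contra hne
        exact h ((hmemJ i).2 hne)
      rw [this, Function.update_self, extJ, dif_neg (by rw [hmemJ]; simp)]
  have hproj_ext : ∀ (z : ↥(Jset n hn) → M) (b : M),
      proj M n (Jset n hn) (extJ M n hn z b) = z := by
    intro z b
    funext i
    show extJ M n hn z b ↑i = z i
    rw [extJ, dif_pos i.2]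
  have himage_ext : ∀ (z : ↥(Jset n hn) → M) (b : M),
      (extJ M n hn z b) '' {i : Fin n | i ≠ lst} =
        Set.range (fun i : ↥(Jset n hn) => z i) := by
    intro z b
    ext c
    constructor
    · rintro ⟨i, hi, rfl⟩
      refine ⟨⟨i, (hmemJ i).2 hi⟩, ?_⟩
      show z ⟨i, (hmemJ i).2 hi⟩ = extJ M n hn z b i
      rw [extJ, dif_pos ((hmemJ i).2 hi)]
    · rintro ⟨i, rfl⟩
      refine ⟨↑i, (hmemJ ↑i).1 i.2, ?_⟩
      show extJ M n hn z b ↑i = z i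
      rw [extJ, dif_pos i.2]

  set F : Set (Fin n → M) := E ∩ ⋂ i, Fseq i with hFdefn
  haveI hctY : Countable ↥Y := hYc.to_subtype
  haveI hctF : ∀ K : ℕ, Countable (L.Formula (Fin K ⊕ Fin n)) :=
    fun K => countable_formula _
  let ι : Type _ := Σ K : ℕ, L.Formula (Fin K ⊕ Fin n) × (Fin K → ↥Y) × Fin r
  haveI hctι : Countable ι := by
    refine @instCountableSigma _ _ _ ?_
    intro K
    infer_instance
  let XP : ι → Set M := fun idx => insert w (X ∪ Set.range (fun j => (idx.2.2.1 j : M)))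
  let PSI : (idx : ι) → L.Formula (Fin (m + idx.1) ⊕ Fin n) := fun idx =>
    (ψ.relabel (Sum.map (Fin.castAdd idx.1) id)) ⊓
      (idx.2.1.relabel (Sum.map (Fin.natAdd m) id))
  let PP : (idx : ι) → (Fin (m + idx.1) → M) := fun idx =>
    Fin.append p (fun j => (idx.2.2.1 j : M))
  let SC : ι → Set (Set (Fin n → M)) := fun idx =>
    Set.range Fseq ∪
    ({ {a | (PSI idx).Realize (Sum.elim (PP idx) a)},
       {a | ∃ g : Fin (idx.2.2.2 : ℕ) → M, Function.Injective g ∧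
         (∀ t, (PSI idx).Realize (Sum.elim (PP idx) (Function.update a lst (g t)))) ∧
         ∀ c, (PSI idx).Realize (Sum.elim (PP idx) (Function.update a lst c)) →
           ∃ t, c = g t} } ∪
     {s | ∃ (k : ℕ) (φ : L.Formula (Fin k ⊕ Fin n)) (u : Fin k → M),
        (∀ j, u j ∈ XP idx) ∧
        s = {a | φ.Realize (Sum.elim u a) → ∀ c,
          (PSI idx).Realize (Sum.elim (PP idx) (Function.update a lst c)) →
          φ.Realize (Sum.elim u (Function.update a lst c))}})
  have hXsub : ∀ idx : ι, X ⊆ XP idx :=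
    fun idx => (Set.subset_union_left).trans (Set.subset_insert _ _)
  have hPPmem : ∀ idx : ι, ∀ j, PP idx j ∈ XP idx := by
    intro idx j
    refine Fin.addCases (fun i => ?_) (fun i => ?_) j
    · show Fin.append p (fun j => (idx.2.2.1 j : M)) (Fin.castAdd _ i) ∈ _
      rw [Fin.append_left]
      exact hXsub idx (hpX i)
    · show Fin.append p (fun j => (idx.2.2.1 j : M)) (Fin.natAdd _ i) ∈ _
      rw [Fin.append_right]
      exact Set.mem_insert_of_mem _ (Or.inr ⟨i, rfl⟩)
  -- the main pointwise analysis of members of `E ∩ ⋂₀ SC idx`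
  have hstep : ∀ idx : ι, ∀ a, a ∈ E ∩ ⋂₀ SC idx →
      a ∈ F ∧
      typeRealizations L M (XP idx ∪ a '' {i : Fin n | i ≠ lst}) (a lst)
        = {c | (PSI idx).Realize (Sum.elim (PP idx) (Function.update a lst c))} ∧
      IsolatesTypeOver L M (XP idx ∪ a '' {i : Fin n | i ≠ lst})
        {c | (PSI idx).Realize (Sum.elim (PP idx) (Function.update a lst c))} (a lst) := by
    intro idx a ha
    obtain ⟨haE, haI⟩ := ha
    have haF : a ∈ F := by
      refine ⟨haE, ?_⟩
      rw [Set.mem_iInter]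
      intro i
      exact Set.mem_sInter.1 haI _ (Or.inl ⟨i, rfl⟩)
    have haC0 : (PSI idx).Realize (Sum.elim (PP idx) a) :=
      Set.mem_sInter.1 haI _ (Or.inr (Or.inl (Set.mem_insert _ _)))
    have halst : a lst ∈ {c | (PSI idx).Realize (Sum.elim (PP idx)
        (Function.update a lst c))} := by
      show (PSI idx).Realize (Sum.elim (PP idx) (Function.update a lst (a lst)))
      rwa [Function.update_eq_self]
    have hiso2 : ∀ (mh : ℕ) (χ : L.Formula (Fin mh ⊕ Fin 1)) (q : Fin mh → M),
        (∀ i, q i ∈ XP idx ∪ a '' {i : Fin n | i ≠ lst}) →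
        χ.Realize (Sum.elim q fun _ => a lst) →
        ∀ c ∈ {c | (PSI idx).Realize (Sum.elim (PP idx) (Function.update a lst c))},
          χ.Realize (Sum.elim q fun _ => c) := by
      intro mh χ q hq hχ c hc
      obtain ⟨φ, u, hu, hequiv⟩ := exists_formula_of_params_union χ q a lst (XP idx) w
        (Set.mem_insert w _) hq
      have hD : a ∈ {a' | φ.Realize (Sum.elim u a') → ∀ c,
          (PSI idx).Realize (Sum.elim (PP idx) (Function.update a' lst c)) →
          φ.Realize (Sum.elim u (Function.update a' lst c))} :=
        Set.mem_sInter.1 haI _ (Or.inr (Or.inr ⟨mh, φ, u, hu, rfl⟩))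
      have hφa : φ.Realize (Sum.elim u a) := by
        have h' := (hequiv (a lst)).2 hχ
        rwa [Function.update_eq_self] at h'
      exact (hequiv c).1 (hD hφa c hc)
    refine ⟨haF, ?_, halst, hiso2⟩
    apply Set.Subset.antisymm
    · intro c hc
      exact realize_update_of_mem_typeRealizations (PSI idx) (PP idx) a lst ⟨0, by omega⟩ hj0
        (XP idx ∪ a '' {i : Fin n | i ≠ lst}) (fun j => Or.inl (hPPmem idx j))
        (fun i hi => Or.inr ⟨i, hi, rfl⟩) hc haC0
    · intro c hc mh χ q hq hχ
      exact hiso2 mh χ q hq hχ c hc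
  have hnull : ∀ idx : ι,
      nuI L M n ν (Jset n hn) (proj M n (Jset n hn) '' (E ∩ ⋂₀ SC idx)) = 0 := by
    intro idx
    by_contra hne
    have hXPct : (XP idx).Countable := (hXc.union (Set.countable_range _)).insert w
    haveI : Countable ↥(XP idx) := hXPct.to_subtype
    have hSCct : (SC idx).Countable := by
      refine (Set.countable_range Fseq).union
        ((((Set.countable_singleton _).insert _)).union ?_)
      have hsubD : {s | ∃ (k : ℕ) (φ : L.Formula (Fin k ⊕ Fin n)) (u : Fin k → M),
          (∀ j, u j ∈ XP idx) ∧
          s = {a | φ.Realize (Sum.elim u a) → ∀ c,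
            (PSI idx).Realize (Sum.elim (PP idx) (Function.update a lst c)) →
            φ.Realize (Sum.elim u (Function.update a lst c))}} ⊆
          Set.range (fun t : (Σ k : ℕ, L.Formula (Fin k ⊕ Fin n) × (Fin k → ↥(XP idx))) =>
            {a | t.2.1.Realize (Sum.elim (fun j => (t.2.2 j : M)) a) → ∀ c,
              (PSI idx).Realize (Sum.elim (PP idx) (Function.update a lst c)) →
              t.2.1.Realize (Sum.elim (fun j => (t.2.2 j : M))
                (Function.update a lst c))}) := by
        rintro s ⟨k, φ, u, hu, rfl⟩
        exact ⟨⟨k, φ, fun j => ⟨u j, hu j⟩⟩, rfl⟩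
      exact (Set.countable_range _).mono hsubD
    have hSCne : (SC idx).Nonempty :=
      ⟨_, Or.inr (Or.inl (Set.mem_insert _ _))⟩
    obtain ⟨f, hf⟩ := hSCct.exists_eq_range hSCne
    have hIf : (⋂ i : ℕ, f i) = ⋂₀ SC idx := by
      rw [hf, Set.sInter_range]
    have hLD : LemmaData L M n hn ν E (XP idx) f ((idx.2.2.2 : Fin r) : ℕ) (m + idx.1)
        (PSI idx) (PP idx) := by
      refine ⟨hXPct, ?_, ?_, hPPmem idx, ?_, ?_⟩
      · exact MeasurableSpace.generateFrom_mono
          (fun s hs => Set.Definable.mono hs (hXsub idx)) _ hEmeas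
      · intro i
        have hfi : f i ∈ SC idx := hf ▸ Set.mem_range_self i
        rcases hfi with ⟨j, hj⟩ | hfi
        · rw [← hj]
          exact (hFdef j).mono (hXsub idx)
        · rcases hfi with hfi | hfi
          · rcases hfi with hfi | hfi
            · rw [hfi]
              exact definable_of_formula_params (XP idx) (PSI idx) (PP idx) (hPPmem idx)
            · rw [Set.mem_singleton_iff] at hfi
              rw [hfi]
              exact definable_count (XP idx) lst _ (PSI idx) (PP idx) (hPPmem idx)
          · obtain ⟨k, φ, u, hu, hs⟩ := hfi
            rw [hs]
            exact definable_dset (XP idx) lst (PSI idx) (PP idx) (hPPmem idx) φ u hu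
      · rw [hIf]
        exact pos_iff_ne_zero.2 hne
      · intro a haf
        have ha' : a ∈ E ∩ ⋂₀ SC idx := ⟨haf.1, hIf ▸ haf.2⟩
        obtain ⟨haF, hEq, hIso⟩ := hstep idx a ha'
        refine ⟨hIso, ?_, ?_⟩
        · exact ((hmainD a haF).2.1).subset
            (typeRealizations_antitone
              (Set.union_subset_union_left _ (hXsub idx)) _)
        · show (typeRealizations L M (XP idx ∪ a '' {i : Fin n | i ≠ lst}) (a lst)).ncard
            = ((idx.2.2.2 : Fin r) : ℕ)
          rw [hEq]
          obtain ⟨g, hg1, hg2, hg3⟩ :=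
            Set.mem_sInter.1 ha'.2 _ (Or.inr (Or.inl (Set.mem_insert_of_mem _ rfl)))
          have hrg : {c | (PSI idx).Realize (Sum.elim (PP idx)
              (Function.update a lst c))} = Set.range g := by
            ext c
            constructor
            · intro hc
              obtain ⟨t, hct⟩ := hg3 c hc
              exact ⟨t, hct.symm⟩
            · rintro ⟨t, rfl⟩
              exact hg2 t
          rw [hrg, ncard_range_inj g hg1]
    exact absurd (hmin _ _ _ _ _ _ hLD) (Nat.not_le.2 (idx.2.2.2).isLt)
  have hcover : {z : ↥(Jset n hn) → M |
        z ∈ proj M n (Jset n hn) '' F ∧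
        ∃ b : M, extJ M n hn z b ∈ F ∧
          ¬ IsolatesTypeOver L M (Y ∪ Set.range fun i : ↥(Jset n hn) => z i)
            {c : M | ψ.Realize (Sum.elim p (extJ M n hn z c))} b} ⊆
      ⋃ idx : ι, proj M n (Jset n hn) '' (E ∩ ⋂₀ SC idx) := by
    rintro z ⟨hz1, b, hbF, hbad⟩
    set a : Fin n → M := extJ M n hn z b with hadef
    have halast : a lst = b := hext_last z b
    have hupda : Function.update a lst b = a := by
      rw [← halast, Function.update_eq_self]
    set Sψ : Set M := {c | ψ.Realize (Sum.elim p (Function.update a lst c))} with hSψ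
    have hSψ_ext : Sψ = {c | ψ.Realize (Sum.elim p (extJ M n hn z c))} := by
      rw [hSψ]
      ext c
      rw [Set.mem_setOf_eq, Set.mem_setOf_eq, hupd_ext z b c]
    obtain ⟨hIso, hFin, hCard⟩ := hmainD a hbF
    have hbS : b ∈ Sψ := by
      show ψ.Realize (Sum.elim p (Function.update a lst b))
      rw [← halast]
      exact hIso.1
    have hψa : ψ.Realize (Sum.elim p a) := by
      have h' := hbS
      rw [hSψ, Set.mem_setOf_eq, hupda] at h'
      exact h'
    have hTRX : typeRealizations L M (X ∪ a '' {i : Fin n | i ≠ lst}) (a lst) = Sψ := by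
      apply Set.Subset.antisymm
      · intro c hc
        exact realize_update_of_mem_typeRealizations ψ p a lst ⟨0, by omega⟩ hj0 _
          (fun j => Or.inl (hpX j)) (fun i hi => Or.inr ⟨i, hi, rfl⟩) hc hψa
      · intro c hc mh χ q hq hχ
        exact hIso.2 mh χ q hq hχ c hc
    have hTfin : Sψ.Finite := hTRX ▸ hFin
    have hScard : Sψ.ncard = r := hTRX ▸ hCard
    set T : Set M := typeRealizations L M (Y ∪ a '' {i : Fin n | i ≠ lst}) b with hTdef
    have hTsub : T ⊆ Sψ := by
      rw [← hTRX, hTdef, ← halast]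
      exact typeRealizations_antitone (Set.union_subset_union_left _ hXY) _
    have hbT : b ∈ T := self_mem_typeRealizations _ b
    have hbad' : ¬ IsolatesTypeOver L M (Y ∪ a '' {i : Fin n | i ≠ lst}) Sψ b := by
      intro hI
      apply hbad
      rw [hSψ_ext, himage_ext z b] at hI
      exact hI
    have hsep : ∃ (mh : ℕ) (χ : L.Formula (Fin mh ⊕ Fin 1)) (q : Fin mh → M),
        (∀ i, q i ∈ Y ∪ a '' {i : Fin n | i ≠ lst}) ∧
        χ.Realize (Sum.elim q fun _ => b) ∧
        ∃ b' ∈ Sψ, ¬ χ.Realize (Sum.elim q fun _ => b') := by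
      by_contra hcon
      push_neg at hcon
      exact hbad' ⟨hbS, fun mh χ q hq hχ => hcon mh χ q hq hχ⟩
    obtain ⟨mh0, χ0, q0, hq0, hχ0b, b', hb'S, hb'n⟩ := hsep
    have hb'T : b' ∉ T := fun h => hb'n (h mh0 χ0 q0 hq0 hχ0b)
    have hTlt : T.ncard < r := by
      rw [← hScard]
      exact Set.ncard_lt_ncard ⟨hTsub, fun hsub => hb'T (hsub hb'S)⟩ hTfin
    have hsep2 : ∀ c ∈ Sψ \ T, ∃ t : (Σ k : ℕ, L.Formula (Fin k ⊕ Fin n) × (Fin k → M)),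
        (∀ j, t.2.2 j ∈ Y) ∧ t.2.1.Realize (Sum.elim t.2.2 a) ∧
        ¬ t.2.1.Realize (Sum.elim t.2.2 (Function.update a lst c)) ∧
        ∀ x ∈ T, t.2.1.Realize (Sum.elim t.2.2 (Function.update a lst x)) := by
      rintro c ⟨hcS, hcT⟩
      have hex : ∃ (mh : ℕ) (χ : L.Formula (Fin mh ⊕ Fin 1)) (q : Fin mh → M),
          (∀ i, q i ∈ Y ∪ a '' {i : Fin n | i ≠ lst}) ∧
          χ.Realize (Sum.elim q fun _ => b) ∧ ¬ χ.Realize (Sum.elim q fun _ => c) := by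
        by_contra hcon
        push_neg at hcon
        exact hcT (fun mh χ q hq hχ => hcon mh χ q hq hχ)
      obtain ⟨mh, χ, q, hq, hχb, hχc⟩ := hex
      obtain ⟨φ, u, hu, hequiv⟩ := exists_formula_of_params_union χ q a lst Y w hwY hq
      refine ⟨⟨mh, φ, u⟩, hu, ?_, ?_, ?_⟩
      · have h' := (hequiv b).2 hχb
        rwa [hupda] at h'
      · intro hc'
        exact hχc ((hequiv c).1 hc')
      · intro x hx
        exact (hequiv x).2 (hx mh χ q hq hχb)
    choose tf htfY htfa htfc htfT using hsep2
    have hDfin : (Sψ \ T).Finite := hTfin.subset Set.diff_subset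
    set l : List (Σ k : ℕ, L.Formula (Fin k ⊕ Fin n) × (Fin k → M)) :=
      hDfin.toFinset.attach.toList.map
        (fun c : {x // x ∈ hDfin.toFinset} =>
          tf c.1 (hDfin.mem_toFinset.1 c.2)) with hldef
    have hlY : ∀ x ∈ l, ∀ j, x.2.2 j ∈ Y := by
      intro x hx
      rw [hldef, List.mem_map] at hx
      obtain ⟨c, _, rfl⟩ := hx
      exact htfY _ _
    obtain ⟨K, Φ, U, hU, hReal⟩ := exists_conj_formula Y l hlY
    refine Set.mem_iUnion.2 ⟨⟨K, Φ, fun j => ⟨U j, hU j⟩, ⟨T.ncard, hTlt⟩⟩, ?_⟩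
    set idx : ι := ⟨K, Φ, fun j => ⟨U j, hU j⟩, ⟨T.ncard, hTlt⟩⟩ with hidxdef
    have hPSI : ∀ v : Fin n → M, ((PSI idx).Realize (Sum.elim (PP idx) v) ↔
        (ψ.Realize (Sum.elim p v) ∧ Φ.Realize (Sum.elim U v))) :=
      fun v => realize_pairConj ψ Φ p U v
    have hla : ∀ x ∈ l, x.2.1.Realize (Sum.elim x.2.2 a) := by
      intro x hx
      rw [hldef, List.mem_map] at hx
      obtain ⟨c, _, rfl⟩ := hx
      exact htfa _ _
    have hlT : ∀ x ∈ l, ∀ d ∈ T, x.2.1.Realize (Sum.elim x.2.2 (Function.update a lst d)) := by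
      intro x hx
      rw [hldef, List.mem_map] at hx
      obtain ⟨c, _, rfl⟩ := hx
      exact htfT _ _
    have hST : {c | (PSI idx).Realize (Sum.elim (PP idx) (Function.update a lst c))} = T := by
      ext c
      rw [Set.mem_setOf_eq, hPSI (Function.update a lst c)]
      constructor
      · rintro ⟨h1, h2⟩
        by_contra hcT
        have hcS : c ∈ Sψ := h1
        have hmem : tf c ⟨hcS, hcT⟩ ∈ l := by
          rw [hldef, List.mem_map]
          exact ⟨⟨c, hDfin.mem_toFinset.2 ⟨hcS, hcT⟩⟩,
            Finset.mem_toList.2 (Finset.mem_attach _ _), rfl⟩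
        exact htfc c ⟨hcS, hcT⟩ ((hReal (Function.update a lst c)).1 h2 _ hmem)
      · intro hcT
        refine ⟨hTsub hcT, ?_⟩
        exact (hReal (Function.update a lst c)).2 (fun x hx => hlT x hx c hcT)
    have haSC : a ∈ E ∩ ⋂₀ SC idx := by
      refine ⟨hbF.1, ?_⟩
      rw [Set.mem_sInter]
      intro s hs
      rcases hs with ⟨j, hj⟩ | hs
      · rw [← hj]
        exact Set.mem_iInter.1 hbF.2 j
      · rcases hs with hs | hs
        · rcases hs with hs | hs
          · rw [hs]
            show (PSI idx).Realize (Sum.elim (PP idx) a)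
            exact (hPSI a).2 ⟨hψa, (hReal a).2 hla⟩
          · rw [Set.mem_singleton_iff] at hs
            rw [hs]
            obtain ⟨g, hg1, hg2⟩ := exists_enum_of_ncard (hTfin.subset hTsub) rfl
            refine ⟨g, hg1, ?_, ?_⟩
            · intro t
              have : g t ∈ T := hg2 ▸ Set.mem_range_self t
              exact (Set.ext_iff.1 hST (g t)).2 this
            · intro c hc
              have : c ∈ T := (Set.ext_iff.1 hST c).1 hc
              rw [← hg2] at this
              obtain ⟨t, ht⟩ := this
              exact ⟨t, ht.symm⟩
        · obtain ⟨k, φ, u, hu, hs⟩ := hs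
          rw [hs]
          intro hφa c hc
          have hcT : c ∈ T := (Set.ext_iff.1 hST c).1 hc
          have hc' : c ∈ typeRealizations L M (Y ∪ a '' {i : Fin n | i ≠ lst}) (a lst) := by
            rw [halast]
            exact hcT
          have hu' : ∀ j, u j ∈ Y ∪ a '' {i : Fin n | i ≠ lst} := by
            intro j
            rcases hu j with hj | hj
            · rw [hj]; exact Or.inl hwY
            · rcases hj with hj | ⟨t, ht⟩
              · exact Or.inl (hXY hj)
              · rw [← ht]
                exact Or.inl (hU t)
          exact realize_update_of_mem_typeRealizations φ u a lst ⟨0, by omega⟩ hj0 _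
            hu' (fun i hi => Or.inr ⟨i, hi, rfl⟩) hc' hφa
    exact ⟨a, haSC, hproj_ext z b⟩
  exact measure_mono_null hcover (measure_iUnion_null hnull)

end MeasureAmalgamation
end
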